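/- arXiv:1908.06465 — 2 statements merged into one kernel-verified Lean document; each statement's English description precedes it below -/
import Mathlib

section
/- For every c ∈ ℂ and a ∈ ℂ \ {0}, the set J*(F_{c,a}), the closure of the set of saddle periodic points of F_{c,a}, is contained in the Julia set J(F_{c,a}) = J⁺(F_{c,a}) ∩ J⁻(F_{c,a}). -/
open Set Polynomial

/-- The complex quadratic Hénon map `F_{c,a}(x,y) = (x² + c − a·y, x)`. -/
noncomputable def henon (c a : ℂ) : ℂ × ℂ → ℂ × ℂ :=
  fun p => (p.1 ^ 2 + c - a * p.2, p.1)

/-- The inverse of the Hénon map: `(x,y) ↦ (y, (y² + c − x)/a)`. -/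
noncomputable def henonInv (c a : ℂ) : ℂ × ℂ → ℂ × ℂ :=
  fun p => (p.2, (p.2 ^ 2 + c - p.1) / a)

/-- `K⁺(F_{c,a})`: points with bounded forward orbit. -/
def Kplus (c a : ℂ) : Set (ℂ × ℂ) :=
  {p | Bornology.IsBounded (Set.range fun n => (henon c a)^[n] p)}

/-- `K⁻(F_{c,a})`: points with bounded backward orbit. -/
def Kminus (c a : ℂ) : Set (ℂ × ℂ) :=
  {p | Bornology.IsBounded (Set.range fun n => (henonInv c a)^[n] p)}

/-- The Julia set `J(F_{c,a}) = ∂K⁺ ∩ ∂K⁻`. -/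
def juliaSet (c a : ℂ) : Set (ℂ × ℂ) :=
  frontier (Kplus c a) ∩ frontier (Kminus c a)

/-- `p` is a saddle point of period `n` for `F`: `F^n(p) = p` and the complex derivative of
`F^n` at `p` has characteristic polynomial `(X − μ)(X − ν)` with `|μ| > 1 > |ν|`. -/
def IsSaddleOfPeriod (F : ℂ × ℂ → ℂ × ℂ) (n : ℕ) (p : ℂ × ℂ) : Prop :=
  F^[n] p = p ∧ ∃ μ ν : ℂ, 1 < ‖μ‖ ∧ ‖ν‖ < 1 ∧
    LinearMap.charpoly ((fderiv ℂ (F^[n]) p : (ℂ × ℂ) →L[ℂ] ℂ × ℂ) :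
      (ℂ × ℂ) →ₗ[ℂ] ℂ × ℂ) = (X - C μ) * (X - C ν)

/-- `p` is a saddle periodic point of `F`. -/
def IsSaddlePeriodicPt (F : ℂ × ℂ → ℂ × ℂ) (p : ℂ × ℂ) : Prop :=
  ∃ n : ℕ, 1 ≤ n ∧ IsSaddleOfPeriod F n p

/-- `J*(F)`: the closure of the set of saddle periodic points of `F`. -/
def Jstar (F : ℂ × ℂ → ℂ × ℂ) : Set (ℂ × ℂ) :=
  closure {p | IsSaddlePeriodicPt F p}

/-!
A saddle point `p` of period `n` has a finite orbit, so it lies in `K⁺` and `K⁻`. Points with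
`|x| ≥ R := |a| + |c| + 2` and `|y| ≤ |x|` escape under `F`, which yields the filtration bound
`‖F^k q‖ ≤ max R ‖q‖` on `K⁺`. If `p` were interior to `K⁺`, the iterates `F^{nk}` would thus be
uniformly bounded on a ball around `p`, and the Cauchy estimate would bound
`D(F^{nk})(p) = D(F^n)(p)^k` uniformly in `k`, which the eigenvalue `|μ| > 1` forbids. After
swapping coordinates `F⁻¹` has the same shape as `F`, and `D(F^{-n})(p)` has the eigenvalue
`ν⁻¹`, so the same argument places `p` on `∂K⁻`. As `J` is closed, it contains `J*`.
-/

open Function Metric Module.End Topology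

/-- `Kplus c a` and `Kminus c a` are, definitionally, `boundedOrbits` of `henon c a` and
`henonInv c a`. -/
def boundedOrbits {X : Type*} [Bornology X] (F : X → X) : Set X :=
  {p | Bornology.IsBounded (range fun n => F^[n] p)}

section BoundedOrbits

variable {X : Type*} [PseudoMetricSpace X] {F : X → X}

theorem Function.IsPeriodicPt.mem_boundedOrbits {n : ℕ} {p : X} (hp : IsPeriodicPt F n p)
    (hn : 0 < n) : p ∈ boundedOrbits F := by
  refine ((finite_range fun k : Fin n => F^[k] p).subset ?_).isBounded
  rintro _ ⟨k, rfl⟩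
  exact ⟨⟨k % n, Nat.mod_lt k hn⟩, hp.iterate_mod_apply k⟩

theorem iterate_mem_boundedOrbits {p : X} (hp : p ∈ boundedOrbits F) (m : ℕ) :
    F^[m] p ∈ boundedOrbits F := by
  refine Bornology.IsBounded.subset hp ?_
  rintro _ ⟨k, rfl⟩
  exact ⟨k + m, iterate_add_apply F k m p⟩

theorem Function.Semiconj.mem_boundedOrbits {Y : Type*} [PseudoMetricSpace Y] {e : X → Y}
    {K : NNReal} (he : LipschitzWith K e) {G : Y → Y} (h : Semiconj e F G) {q : X}
    (hq : q ∈ boundedOrbits F) : e q ∈ boundedOrbits G := by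
  have horbit : (range fun n => G^[n] (e q)) = e '' range fun n => F^[n] q := by
    rw [← range_comp]
    exact congrArg range (funext fun n => ((h.iterate_right n).eq q).symm)
  show Bornology.IsBounded _
  rw [horbit]
  exact he.isBounded_image hq

end BoundedOrbits

section Eigenvalues

variable {K V : Type*} [Field K] [AddCommGroup V] [Module K V] {A B : Module.End K V} {ν : K}

theorem Module.End.HasEigenvalue.ne_zero_of_mul_eq_one (hBA : B * A = 1)
    (hν : A.HasEigenvalue ν) : ν ≠ 0 := by
  rintro rfl
  obtain ⟨v, hv⟩ := hν.exists_hasEigenvector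
  refine hv.2 ?_
  calc v = (B * A) v := by rw [hBA, Module.End.one_apply]
    _ = 0 := by rw [Module.End.mul_apply, hv.apply_eq_smul, zero_smul, map_zero]

theorem Module.End.HasEigenvalue.inv_of_mul_eq_one (hBA : B * A = 1)
    (hν : A.HasEigenvalue ν) : B.HasEigenvalue ν⁻¹ := by
  obtain ⟨v, hv⟩ := hν.exists_hasEigenvector
  have hBv : ν • B v = v := by
    rw [← map_smul, ← hv.apply_eq_smul, ← Module.End.mul_apply, hBA, Module.End.one_apply]
  refine hasEigenvalue_of_hasEigenvector ⟨mem_eigenspace_iff.mpr ?_, hv.2⟩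
  calc B v = ν⁻¹ • ν • B v := by
        rw [smul_smul, inv_mul_cancel₀ (hν.ne_zero_of_mul_eq_one hBA), one_smul]
    _ = ν⁻¹ • v := by rw [hBv]

end Eigenvalues

theorem fderiv_mul_fderiv_of_leftInverse {𝕜 E : Type*} [NontriviallyNormedField 𝕜]
    [NormedAddCommGroup E] [NormedSpace 𝕜 E] {G H : E → E} (hHG : LeftInverse H G) {p : E}
    (hp : G p = p) (hH : DifferentiableAt 𝕜 H p) (hG : DifferentiableAt 𝕜 G p) :
    (fderiv 𝕜 H p : E →ₗ[𝕜] E) * fderiv 𝕜 G p = 1 := by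
  rw [← hp] at hH
  have hcomp := fderiv_comp p hH hG
  rw [hHG.comp_eq_id, fderiv_id, hp] at hcomp
  exact LinearMap.ext fun v => (DFunLike.congr_fun hcomp v).symm

theorem exists_lt_norm_iterate_of_hasEigenvalue {E : Type*} [NormedAddCommGroup E]
    [NormedSpace ℂ E] {G : E → E} {p : E} {μ : ℂ} (hG : Differentiable ℂ G) (hp : G p = p)
    (hμ : HasEigenvalue (fderiv ℂ G p : E →ₗ[ℂ] E) μ) (h1μ : 1 < ‖μ‖) {U : Set E}
    (hU : U ∈ 𝓝 p) (M : ℝ) : ∃ q ∈ U, ∃ k, M < ‖G^[k] q‖ := by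
  by_contra! hM
  obtain ⟨ε, hε, hball⟩ := Metric.mem_nhds_iff.mp hU
  have hcauchy (k : ℕ) : ‖fderiv ℂ G^[k] p‖ ≤ 2 * M / ε := by
    refine Complex.norm_fderiv_le_div_of_mapsTo_ball (hG.iterate k).differentiableOn
      (fun q hq => ?_) hε
    rw [mem_closedBall, dist_eq_norm]
    linarith [norm_sub_le (G^[k] q) (G^[k] p), hM q (hball hq) k,
      hM p (hball (mem_ball_self hε)) k]
  obtain ⟨v, hv⟩ := hμ.exists_hasEigenvector
  have hv0 : 0 < ‖v‖ := norm_pos_iff.mpr hv.2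
  obtain ⟨k, hk⟩ := pow_unbounded_of_one_lt (2 * M / ε) h1μ
  refine hk.not_ge (le_of_mul_le_mul_right ?_ hv0)
  calc ‖μ‖ ^ k * ‖v‖ = ‖fderiv ℂ G^[k] p v‖ := by
        rw [((hG p).hasFDerivAt.iterate hp k).fderiv, ← norm_pow, ← norm_smul,
          ← hv.pow_apply k, ← ContinuousLinearMap.toLinearMap_pow, ContinuousLinearMap.coe_coe]
    _ ≤ ‖fderiv ℂ G^[k] p‖ * ‖v‖ := (fderiv ℂ G^[k] p).le_opNorm v
    _ ≤ 2 * M / ε * ‖v‖ := by gcongr; exact hcauchy k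

theorem Function.IsPeriodicPt.mem_frontier_boundedOrbits {E : Type*} [NormedAddCommGroup E]
    [NormedSpace ℂ E] {F : E → E} (hF : Differentiable ℂ F) {R : ℝ}
    (hK : ∀ q ∈ boundedOrbits F, ∀ k, ‖F^[k] q‖ ≤ max R ‖q‖) {n : ℕ} (hn : 0 < n) {p : E}
    (hp : IsPeriodicPt F n p) {μ : ℂ} (hμ : HasEigenvalue (fderiv ℂ F^[n] p : E →ₗ[ℂ] E) μ)
    (h1μ : 1 < ‖μ‖) : p ∈ frontier (boundedOrbits F) := by
  refine ⟨subset_closure (hp.mem_boundedOrbits hn), fun hint => ?_⟩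
  obtain ⟨q, ⟨hqK, hqp⟩, k, hk⟩ := exists_lt_norm_iterate_of_hasEigenvalue (hF.iterate n) hp
    hμ h1μ (Filter.inter_mem (isOpen_interior.mem_nhds hint) (ball_mem_nhds p one_pos))
    (max R (‖p‖ + 1))
  rw [← iterate_mul] at hk
  have hq : ‖q‖ ≤ ‖p‖ + 1 := by
    rw [mem_ball_iff_norm] at hqp
    linarith [norm_le_insert' q p]
  exact hk.not_ge ((hK q (interior_subset hqK) (n * k)).trans (max_le_max le_rfl hq))

section Filtration

variable {E : Type*} [NormedAddCommGroup E] {G : E × E → E × E} {R : ℝ}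
  (hsnd : ∀ q, (G q).2 = q.1)
  (hgrow : ∀ q : E × E, R ≤ ‖q.1‖ → ‖q.2‖ ≤ ‖q.1‖ → ‖q.1‖ + 1 ≤ ‖(G q).1‖)
include hsnd hgrow

theorem notMem_boundedOrbits_of_le_norm_fst {q : E × E} (h1 : R ≤ ‖q.1‖)
    (h2 : ‖q.2‖ ≤ ‖q.1‖) : q ∉ boundedOrbits G := by
  have hesc (k : ℕ) : ‖(G^[k] q).2‖ ≤ ‖(G^[k] q).1‖ ∧ ‖q.1‖ + k ≤ ‖(G^[k] q).1‖ := by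
    induction k with
    | zero => simpa using h2
    | succ k ih =>
      have hstep := hgrow _ (by linarith [ih.2, k.cast_nonneg (α := ℝ)]) ih.1
      rw [iterate_succ_apply', hsnd]
      push_cast
      constructor <;> linarith
  intro (hb : Bornology.IsBounded (range fun n => G^[n] q))
  obtain ⟨C, hC⟩ := isBounded_iff_forall_norm_le.mp hb
  obtain ⟨k, hk⟩ := exists_nat_gt (C - ‖q.1‖)
  linarith [(hesc k).2, (norm_fst_le (G^[k] q)).trans (hC _ ⟨k, rfl⟩)]

theorem norm_iterate_le_of_mem_boundedOrbits {q : E × E} (hq : q ∈ boundedOrbits G) (k : ℕ) :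
    ‖G^[k] q‖ ≤ max R ‖q‖ := by
  induction k with
  | zero => exact le_max_right R ‖q‖
  | succ k ih =>
    rw [norm_prod_le_iff] at ih ⊢
    have hy : (G^[k + 1] q).2 = (G^[k] q).1 := by rw [iterate_succ_apply', hsnd]
    refine ⟨?_, hy ▸ ih.1⟩
    by_contra! hx
    exact notMem_boundedOrbits_of_le_norm_fst hsnd hgrow ((le_max_left R ‖q‖).trans hx.le)
      (hy ▸ ih.1.trans hx.le) (iterate_mem_boundedOrbits hq (k + 1))

end Filtration

theorem sub_norm_le_norm_sq_add_sub {𝕜 : Type*} [NormedDivisionRing 𝕜] (x c w : 𝕜) :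
    ‖x‖ ^ 2 - ‖c‖ - ‖w‖ ≤ ‖x ^ 2 + c - w‖ := by
  have h := norm_sub_norm_le (x ^ 2) (-c + w)
  rw [norm_pow, sub_add_eq_sub_sub, sub_neg_eq_add] at h
  linarith [norm_add_le (-c) w, norm_neg c]

section Henon

variable {c a : ℂ}

theorem differentiable_henon : Differentiable ℂ (henon c a) := by
  unfold henon; fun_prop

theorem differentiable_henonInv : Differentiable ℂ (henonInv c a) := by
  unfold henonInv; fun_prop

theorem leftInverse_henonInv_henon (ha : a ≠ 0) : LeftInverse (henonInv c a) (henon c a) := by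
  rintro ⟨x, y⟩
  simp only [henon, henonInv, Prod.mk.injEq, true_and]
  field_simp
  ring

theorem add_one_le_norm_henon_fst {q : ℂ × ℂ} (h1 : ‖a‖ + ‖c‖ + 2 ≤ ‖q.1‖)
    (h2 : ‖q.2‖ ≤ ‖q.1‖) : ‖q.1‖ + 1 ≤ ‖(henon c a q).1‖ := by
  have hw : ‖a * q.2‖ ≤ ‖a‖ * ‖q.1‖ := by
    rw [norm_mul]; exact mul_le_mul_of_nonneg_left h2 (norm_nonneg a)
  have hx : (henon c a q).1 = q.1 ^ 2 + c - a * q.2 := rfl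
  have := sub_norm_le_norm_sq_add_sub q.1 c (a * q.2)
  rw [hx]
  nlinarith [mul_le_mul_of_nonneg_left h1 (norm_nonneg q.1), norm_nonneg a, norm_nonneg c]

/-- `F⁻¹` read in swapped coordinates; it has the same shape `(x, y) ↦ (g(x, y), x)` as `F`. -/
noncomputable def henonInvSwap (c a : ℂ) : ℂ × ℂ → ℂ × ℂ :=
  Prod.swap ∘ henonInv c a ∘ Prod.swap

theorem add_one_le_norm_henonInvSwap_fst (ha : a ≠ 0) {q : ℂ × ℂ} (h1 : ‖a‖ + ‖c‖ + 2 ≤ ‖q.1‖)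
    (h2 : ‖q.2‖ ≤ ‖q.1‖) : ‖q.1‖ + 1 ≤ ‖(henonInvSwap c a q).1‖ := by
  have hx : (henonInvSwap c a q).1 = (q.1 ^ 2 + c - q.2) / a := rfl
  have := sub_norm_le_norm_sq_add_sub q.1 c q.2
  rw [hx, norm_div, le_div_iff₀ (norm_pos_iff.mpr ha)]
  nlinarith [mul_le_mul_of_nonneg_left h1 (norm_nonneg q.1), norm_nonneg a, norm_nonneg c]

theorem norm_henon_iterate_le {q : ℂ × ℂ} (hq : q ∈ Kplus c a) (k : ℕ) :
    ‖(henon c a)^[k] q‖ ≤ max (‖a‖ + ‖c‖ + 2) ‖q‖ :=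
  norm_iterate_le_of_mem_boundedOrbits (fun _ => rfl) (fun _ => add_one_le_norm_henon_fst) hq k

theorem norm_henonInv_iterate_le (ha : a ≠ 0) {q : ℂ × ℂ} (hq : q ∈ Kminus c a) (k : ℕ) :
    ‖(henonInv c a)^[k] q‖ ≤ max (‖a‖ + ‖c‖ + 2) ‖q‖ := by
  have hconj : Semiconj Prod.swap (henonInv c a) (henonInvSwap c a) := fun q => by
    simp [henonInvSwap]
  have hswap (x : ℂ × ℂ) : ‖x.swap‖ = ‖x‖ := (LinearIsometryEquiv.prodComm ℂ ℂ ℂ).norm_map x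
  calc ‖(henonInv c a)^[k] q‖ = ‖(henonInvSwap c a)^[k] q.swap‖ := by
        rw [← (hconj.iterate_right k).eq, hswap]
    _ ≤ max (‖a‖ + ‖c‖ + 2) ‖q.swap‖ :=
      norm_iterate_le_of_mem_boundedOrbits (fun _ => rfl)
        (fun _ => add_one_le_norm_henonInvSwap_fst ha)
        (hconj.mem_boundedOrbits (LinearIsometryEquiv.prodComm ℂ ℂ ℂ).lipschitz hq) k
    _ = max (‖a‖ + ‖c‖ + 2) ‖q‖ := by rw [hswap]

end Henon

/-- `J*(F_{c,a}) ⊆ J(F_{c,a})`. -/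
theorem Jstar_subset_julia (c a : ℂ) (ha : a ≠ 0) :
    Jstar (henon c a) ⊆ juliaSet c a := by
  refine closure_minimal ?_ (isClosed_frontier.inter isClosed_frontier)
  rintro p ⟨n, hn, hper, μ, ν, hμ, hν, hcp⟩
  have hfix : IsPeriodicPt (henon c a) n p := hper
  have hinv : LeftInverse (henonInv c a)^[n] (henon c a)^[n] :=
    (leftInverse_henonInv_henon ha).iterate n
  have hfix' : IsPeriodicPt (henonInv c a) n p :=
    (congrArg (henonInv c a)^[n] hper).symm.trans (hinv p)
  have hroot (r : ℂ) (hr : ((X - C μ) * (X - C ν)).IsRoot r) :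
      HasEigenvalue (fderiv ℂ (henon c a)^[n] p : (ℂ × ℂ) →ₗ[ℂ] ℂ × ℂ) r := by
    rwa [hasEigenvalue_iff_isRoot_charpoly, hcp]
  have hBA := fderiv_mul_fderiv_of_leftInverse hinv hfix
    (differentiable_henonInv.iterate n p) (differentiable_henon.iterate n p)
  have hDν := hroot ν (by simp)
  have hν0 := hDν.ne_zero_of_mul_eq_one hBA
  exact ⟨hfix.mem_frontier_boundedOrbits differentiable_henon
      (fun _ => norm_henon_iterate_le) hn (hroot μ (by simp)) hμ,
    hfix'.mem_frontier_boundedOrbits differentiable_henonInv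
      (fun _ => norm_henonInv_iterate_le ha) hn (hDν.inv_of_mul_eq_one hBA)
      (by rwa [norm_inv, one_lt_inv₀ (norm_pos_iff.mpr hν0)])⟩
end

section
/- Let Λ ⊆ ℂ be open and connected, λ₀ ∈ Λ, and let (F_λ)_{λ∈Λ} be a holomorphic family of dissipative Hénon maps, i.e. F_λ = F_{c_λ, a_λ} where λ ↦ c_λ and λ ↦ a_λ are holomorphic on Λ and 0 < |a_λ| < 1 for all λ. Suppose there is an equivariant branched holomorphic motion of J* over Λ based at λ₀, namely a map φ : Λ × J*(F_{λ₀}) → ℂ² with φ(λ₀, x) = x for all x, λ ↦ φ(λ, x) holomorphic for each fixed x, φ(λ, F_{λ₀}(x)) = F_λ(φ(λ, x)) for all λ and x, and φ(λ, J*(F_{λ₀})) = J*(F_λ) for each λ. Then the sets J*(F_λ) move continuously in the Hausdorff topology: the map λ ↦ J*(F_λ) is continuous with respect to the Hausdorff distance on nonempty compact subsets of ℂ². -/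
/-!
A periodic orbit of `F_{c,a}` lies in the ball of radius `1 + |a| + |c|`: if `M` is the largest
first coordinate along the orbit, every second coordinate is an earlier first coordinate, and
`x² = x' − c + a y` gives `M² ≤ M + |c| + |a| M`. So `J*(F_{c,a})` lies in that ball, and near
any parameter the holomorphic functions `λ ↦ φ(λ, x)`, `x ∈ J*(F_{λ₀})`, are uniformly bounded,
hence equi-Lipschitz by the Cauchy estimate. As `J*(F_λ) = φ(λ, J*(F_{λ₀}))`, the Hausdorff
distance between two of these sets is at most `sup_x |φ(λ, x) − φ(λ₁, x)|`.
-/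

open Set Polynomial

open Metric Function

theorem sq_norm_fst_le_norm_fst_henon (c a : ℂ) (p : ℂ × ℂ) :
    ‖p.1‖ ^ 2 ≤ ‖(henon c a p).1‖ + ‖c‖ + ‖a‖ * ‖p.2‖ :=
  calc ‖p.1‖ ^ 2 = ‖(henon c a p).1 - c + a * p.2‖ := by
        rw [← norm_pow]; congr 1; simp only [henon]; ring
    _ ≤ ‖(henon c a p).1‖ + ‖c‖ + ‖a‖ * ‖p.2‖ := by
        grw [norm_add_le, norm_sub_le, norm_mul]

theorem henon_finite_invariant_subset_closedBall {c a : ℂ} {O : Set (ℂ × ℂ)} (hO : O.Finite)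
    (hmaps : MapsTo (henon c a) O O) (hsurj : SurjOn (henon c a) O O) :
    O ⊆ closedBall 0 (1 + ‖a‖ + ‖c‖) := by
  rcases O.eq_empty_or_nonempty with rfl | hne
  · exact empty_subset _
  obtain ⟨r, hr, hmax⟩ := exists_max_image O (fun q => ‖q.1‖) hO hne
  have hsnd : ∀ q ∈ O, ‖q.2‖ ≤ ‖r.1‖ := by
    intro q hq
    obtain ⟨t, ht, rfl⟩ := hsurj hq
    exact hmax t ht
  have hM : ‖r.1‖ ^ 2 ≤ ‖r.1‖ + ‖c‖ + ‖a‖ * ‖r.1‖ := by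
    grw [sq_norm_fst_le_norm_fst_henon c a r, hmax _ (hmaps hr), hsnd r hr]
  have hMbound : ‖r.1‖ ≤ 1 + ‖a‖ + ‖c‖ := by
    nlinarith [norm_nonneg a, norm_nonneg c, norm_nonneg r.1]
  intro q hq
  rw [mem_closedBall_zero_iff, norm_prod_le_iff]
  exact ⟨(hmax q hq).trans hMbound, (hsnd q hq).trans hMbound⟩

theorem henon_norm_le_of_isPeriodicPt {c a : ℂ} {n : ℕ} (hn : 0 < n) {p : ℂ × ℂ}
    (hp : IsPeriodicPt (henon c a) n p) : ‖p‖ ≤ 1 + ‖a‖ + ‖c‖ := by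
  set F := henon c a
  have hfin : (range fun j => F^[j] p).Finite :=
    ((finite_Iio n).image fun j => F^[j] p).subset <| range_subset_iff.2 fun j =>
      ⟨j % n, Nat.mod_lt j hn, hp.iterate_mod_apply j⟩
  have hmaps : MapsTo F (range fun j => F^[j] p) (range fun j => F^[j] p) := by
    rintro _ ⟨j, rfl⟩
    exact ⟨j + 1, iterate_succ_apply' F j p⟩
  have hsurj : SurjOn F (range fun j => F^[j] p) (range fun j => F^[j] p) := by
    rintro _ ⟨j, rfl⟩
    refine ⟨F^[j + n - 1] p, mem_range_self _, ?_⟩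
    rw [← iterate_succ_apply' F, Nat.succ_eq_add_one, Nat.sub_add_cancel (by omega),
      iterate_add_apply, hp.eq]
  simpa using henon_finite_invariant_subset_closedBall hfin hmaps hsurj (mem_range_self 0)

theorem Jstar_henon_subset_closedBall (c a : ℂ) :
    Jstar (henon c a) ⊆ closedBall 0 (1 + ‖a‖ + ‖c‖) :=
  closure_minimal (fun _ ⟨_, hn, hper, _⟩ => mem_closedBall_zero_iff.2 <|
    henon_norm_le_of_isPeriodicPt hn hper) isClosed_closedBall

section Holomorphic

variable {E : Type*} [NormedAddCommGroup E] [NormedSpace ℂ E]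

theorem norm_sub_le_of_differentiableOn_closedBall {f : ℂ → E} {c : ℂ} {r R : ℝ}
    (hf : DifferentiableOn ℂ f (closedBall c r)) (hr : 0 < r)
    (hR : ∀ z ∈ closedBall c r, ‖f z‖ ≤ R) {z w : ℂ} (hz : z ∈ ball c (r / 2))
    (hw : w ∈ ball c (r / 2)) : ‖f z - f w‖ ≤ 2 * R / r * ‖z - w‖ := by
  have hdiff : ∀ u ∈ ball c (r / 2), DifferentiableAt ℂ f u := fun u hu =>
    hf.differentiableAt <| Filter.mem_of_superset
      (isOpen_ball.mem_nhds (ball_subset_ball (half_le_self hr.le) hu)) ball_subset_closedBall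
  have hderiv : ∀ u ∈ ball c (r / 2), ‖deriv f u‖ ≤ 2 * R / r := by
    intro u hu
    have hsub : closedBall u (r / 2) ⊆ closedBall c r :=
      closedBall_subset_closedBall' (by linarith [mem_ball.1 hu])
    have hcl : DiffContOnCl ℂ f (ball u (r / 2)) :=
      (hf.mono ((closure_ball u (half_pos hr).ne').subset.trans hsub)).diffContOnCl
    calc ‖deriv f u‖ ≤ R / (r / 2) := Complex.norm_deriv_le_of_forall_mem_sphere_norm_le
          (half_pos hr) hcl fun v hv => hR v (hsub (sphere_subset_closedBall hv))
      _ = 2 * R / r := by field_simp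
  exact (convex_ball c (r / 2)).norm_image_sub_le_of_norm_deriv_le hdiff hderiv hw hz

theorem equicontinuousAt_of_differentiableOn_of_norm_le {ι : Type*} {g : ι → ℂ → E}
    {U : Set ℂ} {z₀ : ℂ} {R : ℝ} (hg : ∀ i, DifferentiableOn ℂ (g i) U) (hU : U ∈ nhds z₀)
    (hR : ∀ i, ∀ z ∈ U, ‖g i z‖ ≤ R) : EquicontinuousAt g z₀ := by
  obtain ⟨r, hr, hsub⟩ := nhds_basis_closedBall.mem_iff.1 hU
  refine equicontinuousAt_of_continuity_modulus (fun z => 2 * R / r * dist z₀ z) ?_ g ?_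
  · have hcont : Continuous fun z => 2 * R / r * dist z₀ z := by fun_prop
    simpa using hcont.tendsto z₀
  · filter_upwards [ball_mem_nhds z₀ (half_pos hr)] with z hz i
    rw [dist_eq_norm, dist_eq_norm]
    exact norm_sub_le_of_differentiableOn_closedBall ((hg i).mono hsub) hr
      (fun w hw => hR i w (hsub hw)) (mem_ball_self (half_pos hr)) hz

end Holomorphic

theorem Metric.hausdorffEDist_image_le_of_forall_edist_le {X Y : Type*}
    [PseudoEMetricSpace Y] {S : Set X} {f g : X → Y} {r : ENNReal}
    (h : ∀ x ∈ S, edist (f x) (g x) ≤ r) : Metric.hausdorffEDist (f '' S) (g '' S) ≤ r :=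
  Metric.hausdorffEDist_le_of_mem_edist
    (forall_mem_image.2 fun x hx => ⟨g x, mem_image_of_mem g hx, h x hx⟩)
    (forall_mem_image.2 fun x hx =>
      ⟨f x, mem_image_of_mem f hx, edist_comm (f x) (g x) ▸ h x hx⟩)

theorem Jstar_moves_continuously_Hausdorff_general
    (Λ : Set ℂ) (hΛo : IsOpen Λ) (l₀ : ℂ)
    (cf af : ℂ → ℂ) (hcf : DifferentiableOn ℂ cf Λ) (haf : DifferentiableOn ℂ af Λ)
    (φ : ℂ → ℂ × ℂ → ℂ × ℂ)
    (hholo : ∀ x ∈ Jstar (henon (cf l₀) (af l₀)), DifferentiableOn ℂ (fun lam => φ lam x) Λ)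
    (himage : ∀ lam ∈ Λ, φ lam '' Jstar (henon (cf l₀) (af l₀)) = Jstar (henon (cf lam) (af lam))) :
    ∀ l₁ ∈ Λ, ∀ ε : ℝ, 0 < ε → ∃ δ : ℝ, 0 < δ ∧
      ∀ lam ∈ Λ, dist lam l₁ < δ →
        EMetric.hausdorffEdist (Jstar (henon (cf lam) (af lam)))
          (Jstar (henon (cf l₁) (af l₁))) < ENNReal.ofReal ε := by
  intro l₁ hl₁ ε hε
  set S := Jstar (henon (cf l₀) (af l₀))
  obtain ⟨r, hr, hball⟩ := nhds_basis_closedBall.mem_iff.1 (hΛo.mem_nhds hl₁)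
  obtain ⟨R, hR⟩ := (isCompact_closedBall l₁ r).exists_bound_of_continuousOn
    (f := fun lam => 1 + ‖af lam‖ + ‖cf lam‖)
    ((continuousOn_const.add (haf.continuousOn.mono hball).norm).add
      (hcf.continuousOn.mono hball).norm)
  have hbdd : ∀ x : S, ∀ lam ∈ closedBall l₁ r, ‖φ lam x‖ ≤ R := fun x lam hlam =>
    (mem_closedBall_zero_iff.1 (Jstar_henon_subset_closedBall _ _
      (himage lam (hball hlam) ▸ mem_image_of_mem _ x.2))).trans
      ((le_abs_self _).trans (hR lam hlam))
  obtain ⟨δ, hδ, hclose⟩ := equicontinuousAt_iff.1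
    (equicontinuousAt_of_differentiableOn_of_norm_le (g := fun (x : S) lam => φ lam x)
      (fun x => (hholo x x.2).mono hball) (closedBall_mem_nhds l₁ hr) hbdd)
    (ε / 2) (half_pos hε)
  refine ⟨δ, hδ, fun lam hlam hdist => ?_⟩
  rw [← himage lam hlam, ← himage l₁ hl₁]
  calc Metric.hausdorffEDist (φ lam '' S) (φ l₁ '' S) ≤ ENNReal.ofReal (ε / 2) :=
        Metric.hausdorffEDist_image_le_of_forall_edist_le fun x hx =>
          (edist_le_ofReal (half_pos hε).le).2
            (dist_comm (φ lam x) _ ▸ (hclose lam hdist ⟨x, hx⟩).le)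
    _ < ENNReal.ofReal ε := (ENNReal.ofReal_lt_ofReal_iff hε).2 (half_lt_self hε)

/-- if a holomorphic family of dissipative Hénon maps admits an equivariant
branched holomorphic motion of `J*`, then `λ ↦ J*(F_λ)` moves continuously in the
Hausdorff topology. -/
theorem Jstar_moves_continuously_Hausdorff
    (Λ : Set ℂ) (hΛo : IsOpen Λ) (hΛc : IsConnected Λ) (l₀ : ℂ) (hl₀ : l₀ ∈ Λ)
    (cf af : ℂ → ℂ) (hcf : DifferentiableOn ℂ cf Λ) (haf : DifferentiableOn ℂ af Λ)
    (hdiss : ∀ lam ∈ Λ, 0 < ‖af lam‖ ∧ ‖af lam‖ < 1)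
    (φ : ℂ → ℂ × ℂ → ℂ × ℂ)
    (hbase : ∀ x ∈ Jstar (henon (cf l₀) (af l₀)), φ l₀ x = x)
    (hholo : ∀ x ∈ Jstar (henon (cf l₀) (af l₀)), DifferentiableOn ℂ (fun lam => φ lam x) Λ)
    (hequiv : ∀ lam ∈ Λ, ∀ x ∈ Jstar (henon (cf l₀) (af l₀)),
      φ lam (henon (cf l₀) (af l₀) x) = henon (cf lam) (af lam) (φ lam x))
    (himage : ∀ lam ∈ Λ, φ lam '' Jstar (henon (cf l₀) (af l₀)) = Jstar (henon (cf lam) (af lam))) :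
    ∀ l₁ ∈ Λ, ∀ ε : ℝ, 0 < ε → ∃ δ : ℝ, 0 < δ ∧
      ∀ lam ∈ Λ, dist lam l₁ < δ →
        EMetric.hausdorffEdist (Jstar (henon (cf lam) (af lam)))
          (Jstar (henon (cf l₁) (af l₁))) < ENNReal.ofReal ε :=
  Jstar_moves_continuously_Hausdorff_general Λ hΛo l₀ cf af hcf haf φ hholo himage
end
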